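/- arXiv:2407.17727 — 2 statements merged into one kernel-verified Lean document; each statement's English description precedes it below -/
import Mathlib

section
/- Consider consensus propagation on a path graph with K nodes, node k holding x_k ∈ ℝ, with updates ω_{k→j}^{[t]} = (x_k + Σ_{i∈N_k\{j}} υ_{i→k}^{[t−1]} ω_{i→k}^{[t−1]})/(1 + Σ_{i∈N_k\{j}} υ_{i→k}^{[t−1]}) and υ_{k→j}^{[t]} = 1 + Σ_{i∈N_k\{j}} υ_{i→k}^{[t−1]}, initialized with υ^{[0]} = 0 messages. Then for every directed edge (k→j), the invariant υ_{k→j}^{[t]}·ω_{k→j}^{[t]} = Σ_{i ∈ S} x_i holds, where S is the set of nodes whose values have reached node k from the side away from j within t steps, and υ_{k→j}^{[t]} = |S|. -/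
/-- Consensus propagation invariant on a path graph with `K` nodes `0, 1, …, K−1`.
`υR t k, ωR t k` are the count/value messages on the directed edge `k → k+1`
at iteration `t`, and `υL t k, ωL t k` those on the edge `k → k−1`.  On a path,
the neighbors of `k` other than `k+1` reduce to `k−1` (and symmetrically), so the
consensus-propagation updates take the form below.  The invariant: `υ·ω` equals
the sum of the values `x_i` of the nodes that have reached `k` from the side away
from the receiver within `t` steps, and `υ` equals the number of such nodes. -/
theorem consensus_propagation_path_invariant (K : ℕ) (x : ℕ → ℝ)
    (ωR υR ωL υL : ℕ → ℕ → ℝ)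
    (hR0 : ∀ k, ωR 0 k = 0 ∧ υR 0 k = 0)
    (hL0 : ∀ k, ωL 0 k = 0 ∧ υL 0 k = 0)
    (hRbase : ∀ t, 1 < K → υR (t + 1) 0 = 1 ∧ ωR (t + 1) 0 = x 0)
    (hRstep : ∀ t k, k + 2 < K →
      υR (t + 1) (k + 1) = 1 + υR t k ∧
      ωR (t + 1) (k + 1) = (x (k + 1) + υR t k * ωR t k) / (1 + υR t k))
    (hLbase : ∀ t, 1 < K → υL (t + 1) (K - 1) = 1 ∧ ωL (t + 1) (K - 1) = x (K - 1))
    (hLstep : ∀ t k, 1 ≤ k → k + 2 ≤ K →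
      υL (t + 1) k = 1 + υL t (k + 1) ∧
      ωL (t + 1) k = (x k + υL t (k + 1) * ωL t (k + 1)) / (1 + υL t (k + 1))) :
    (∀ t k, 1 ≤ t → k + 1 < K →
      υR t k = (min t (k + 1) : ℕ) ∧
      υR t k * ωR t k = ∑ i ∈ Finset.Ico (k + 1 - min t (k + 1)) (k + 1), x i) ∧
    (∀ t k, 1 ≤ t → 1 ≤ k → k < K →
      υL t k = (min t (K - k) : ℕ) ∧
      υL t k * ωL t k = ∑ i ∈ Finset.Ico k (k + min t (K - k)), x i) := by
  constructor
  · -- right-going messages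
    have main : ∀ t k, k + 1 < K →
        υR (t + 1) k = (min (t + 1) (k + 1) : ℕ) ∧
        υR (t + 1) k * ωR (t + 1) k
          = ∑ i ∈ Finset.Ico (k + 1 - min (t + 1) (k + 1)) (k + 1), x i := by
      intro t
      induction t with
      | zero =>
        intro k hk
        match k with
        | 0 =>
          obtain ⟨h1, h2⟩ := hRbase 0 hk
          have : Finset.Ico (0 + 1 - min 1 (0 + 1)) (0 + 1) = {0} := rfl
          rw [this, h1, h2]
          norm_num
        | Nat.succ k =>
          obtain ⟨h1, h2⟩ := hRstep 0 k hk
          rw [(hR0 k).2] at h1 h2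
          rw [(hR0 k).1] at h2
          have hmin : min 1 (k + 1 + 1) = 1 := by omega
          have hico : Finset.Ico (k + 1 + 1 - min 1 (k + 1 + 1)) (k + 1 + 1) = {k + 1} := by
            rw [hmin]; simp [Nat.Ico_succ_singleton]
          rw [hico, hmin, h1, h2]
          norm_num
      | succ t ih =>
        intro k hk
        match k with
        | 0 =>
          obtain ⟨h1, h2⟩ := hRbase (t + 1) hk
          have : Finset.Ico (0 + 1 - min (t + 1 + 1) (0 + 1)) (0 + 1) = {0} := by
            simp
          rw [this, h1, h2]
          norm_num
        | Nat.succ k =>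
          obtain ⟨h1, h2⟩ := hRstep (t + 1) k hk
          obtain ⟨ih1, ih2⟩ := ih k (by omega)
          have hpos : (0 : ℝ) < 1 + υR (t + 1) k := by rw [ih1]; positivity
          have hmin : min (t + 1 + 1) (k + 1 + 1) = min (t + 1) (k + 1) + 1 := by omega
          have hυ : υR (t + 1 + 1) (k + 1) = (min (t + 1 + 1) (k + 1 + 1) : ℕ) := by
            rw [h1, ih1, hmin]; push_cast; ring
          refine ⟨hυ, ?_⟩
          have key : υR (t + 1 + 1) (k + 1) * ωR (t + 1 + 1) (k + 1)
              = x (k + 1) + υR (t + 1) k * ωR (t + 1) k := by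
            rw [h1, h2]; field_simp
          rw [key, ih2, hmin]
          have hle : k + 1 - min (t + 1) (k + 1) ≤ k + 1 := by omega
          rw [show k + 1 + 1 - (min (t + 1) (k + 1) + 1) = k + 1 - min (t + 1) (k + 1) by omega]
          rw [Finset.sum_Ico_succ_top hle]
          ring
    intro t k ht hk
    obtain ⟨t', rfl⟩ : ∃ t', t = t' + 1 := ⟨t - 1, by omega⟩
    exact main t' k hk
  · -- left-going messages
    have main : ∀ t k, 1 ≤ k → k < K →
        υL (t + 1) k = (min (t + 1) (K - k) : ℕ) ∧
        υL (t + 1) k * ωL (t + 1) k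
          = ∑ i ∈ Finset.Ico k (k + min (t + 1) (K - k)), x i := by
      intro t
      induction t with
      | zero =>
        intro k hk1 hk2
        rcases eq_or_lt_of_le (Nat.succ_le_of_lt hk2) with heq | hlt
        · -- k = K - 1
          have hK : 1 < K := by omega
          have hkeq : k = K - 1 := by omega
          obtain ⟨h1, h2⟩ := hLbase 0 hK
          subst hkeq
          have hmin : min 1 (K - (K - 1)) = 1 := by omega
          have hico : Finset.Ico (K - 1) (K - 1 + min 1 (K - (K - 1))) = {K - 1} := by
            rw [hmin]; simp [Nat.Ico_succ_singleton]
          rw [hico, hmin, h1, h2]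
          norm_num
        · -- k + 2 ≤ K
          obtain ⟨h1, h2⟩ := hLstep 0 k hk1 hlt
          rw [(hL0 (k + 1)).2] at h1 h2
          rw [(hL0 (k + 1)).1] at h2
          have hmin : min 1 (K - k) = 1 := by omega
          have hico : Finset.Ico k (k + min 1 (K - k)) = {k} := by
            rw [hmin]; simp [Nat.Ico_succ_singleton]
          rw [hico, hmin, h1, h2]
          norm_num
      | succ t ih =>
        intro k hk1 hk2
        rcases eq_or_lt_of_le (Nat.succ_le_of_lt hk2) with heq | hlt
        · have hK : 1 < K := by omega
          have hkeq : k = K - 1 := by omega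
          obtain ⟨h1, h2⟩ := hLbase (t + 1) hK
          subst hkeq
          have hmin : min (t + 1 + 1) (K - (K - 1)) = 1 := by omega
          have hico : Finset.Ico (K - 1) (K - 1 + min (t + 1 + 1) (K - (K - 1))) = {K - 1} := by
            rw [hmin]; simp [Nat.Ico_succ_singleton]
          rw [hico, hmin, h1, h2]
          norm_num
        · obtain ⟨h1, h2⟩ := hLstep (t + 1) k hk1 hlt
          obtain ⟨ih1, ih2⟩ := ih (k + 1) (by omega) (by omega)
          have hpos : (0 : ℝ) < 1 + υL (t + 1) (k + 1) := by rw [ih1]; positivity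
          have hmin : min (t + 1 + 1) (K - k) = min (t + 1) (K - (k + 1)) + 1 := by omega
          have hυ : υL (t + 1 + 1) k = (min (t + 1 + 1) (K - k) : ℕ) := by
            rw [h1, ih1, hmin]; push_cast; ring
          refine ⟨hυ, ?_⟩
          have key : υL (t + 1 + 1) k * ωL (t + 1 + 1) k
              = x k + υL (t + 1) (k + 1) * ωL (t + 1) (k + 1) := by
            rw [h1, h2]; field_simp
          rw [key, ih2, hmin]
          have hlt' : k < k + (min (t + 1) (K - (k + 1)) + 1) := by omega
          rw [Finset.sum_eq_sum_Ico_succ_bot hlt']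
          rw [show k + (min (t + 1) (K - (k + 1)) + 1) = (k + 1) + min (t + 1) (K - (k + 1)) by omega]
    intro t k ht hk1 hk2
    obtain ⟨t', rfl⟩ : ∃ t', t = t' + 1 := ⟨t - 1, by omega⟩
    exact main t' k hk1 hk2
end

section
/- On a tree, the count messages of consensus propagation converge to subtree sizes: after t ≥ depth iterations (in particular after D = diameter iterations), υ_{k→j}^{[t]} equals the number of nodes in the component of the tree containing k when the edge {k,j} is removed. -/
/-!
Write `B_t(k → j)` (`truncatedBranch G t k j`) for the vertices reachable from `k` by a walk
of length `< t` in the tree with the edge `kj` deleted. Since every edge of a tree is a bridge,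
`B_{t+1}(k → j)` is the disjoint union of `{k}` and of the `B_t(i → k)` over the neighbours
`i ≠ j` of `k`, so `υ_{k→j}^{[t]} = #B_t(k → j)` by induction on `t`. A vertex `v` in the
branch of `k` is joined to `j` by the unique path `j, k, …, v`, so it lies in `B_t(k → j)` once
`t ≥ dist(j, v)`.
-/

open Finset

namespace SimpleGraph

variable {V : Type} {G : SimpleGraph V} {u v k j i : V}

lemma IsAcyclic.not_reachable_deleteEdges_of_adj (hG : G.IsAcyclic) (h : G.Adj k j) :
    ¬ (G.deleteEdges {s(k, j)}).Reachable k j :=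
  isBridge_iff.mp (isAcyclic_iff_forall_adj_isBridge.mp hG h)

lemma IsAcyclic.notMem_support_of_walk_deleteEdges (hG : G.IsAcyclic) (h : G.Adj k j)
    (p : (G.deleteEdges {s(k, j)}).Walk k v) : j ∉ p.support :=
  fun hj ↦ hG.not_reachable_deleteEdges_of_adj h <| by classical exact ⟨p.takeUntil j hj⟩

lemma IsAcyclic.length_eq_dist_of_isPath (hG : G.IsAcyclic) {p : G.Walk u v} (hp : p.IsPath) :
    p.length = G.dist u v := by
  obtain ⟨q, hq, hql⟩ := p.reachable.exists_path_of_dist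
  have : (⟨p, hp⟩ : G.Path u v) = ⟨q, hq⟩ := (hG.subsingleton_path u v).elim _ _
  rw [← hql, congrArg (fun r : G.Path u v ↦ r.val.length) this]

lemma Walk.exists_walk_deleteEdges_of_notMem_support {H : SimpleGraph V} (hle : H ≤ G)
    (p : H.Walk u v) (hk : k ∉ p.support) {e : Sym2 V} (he : k ∈ e) :
    ∃ q : (G.deleteEdges {e}).Walk u v, q.length = p.length :=
  ⟨(p.mapLe hle).toDeleteEdge e fun hmem ↦
      hk (p.support_mapLe_eq_support hle ▸ Walk.mem_support_of_mem_edges hmem he),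
    by simp⟩

variable [Fintype V]

open scoped Classical in
noncomputable def truncatedBranch (G : SimpleGraph V) (t : ℕ) (k j : V) : Finset V :=
  {v | ∃ p : (G.deleteEdges {s(k, j)}).Walk k v, p.length < t}

lemma mem_truncatedBranch {t : ℕ} :
    v ∈ G.truncatedBranch t k j ↔ ∃ p : (G.deleteEdges {s(k, j)}).Walk k v, p.length < t := by
  classical
  simp [truncatedBranch]

lemma truncatedBranch_zero : G.truncatedBranch 0 k j = ∅ := by
  ext v
  simp [mem_truncatedBranch]

lemma truncatedBranch_mono {s t : ℕ} (hst : s ≤ t) :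
    G.truncatedBranch s k j ⊆ G.truncatedBranch t k j := by
  intro v hv
  obtain ⟨p, hp⟩ := mem_truncatedBranch.mp hv
  exact mem_truncatedBranch.mpr ⟨p, hp.trans_le hst⟩

lemma reachable_of_mem_truncatedBranch {t : ℕ} (hv : v ∈ G.truncatedBranch t k j) :
    (G.deleteEdges {s(k, j)}).Reachable k v :=
  (mem_truncatedBranch.mp hv).elim fun p _ ↦ ⟨p⟩

lemma IsAcyclic.mem_truncatedBranch_dist_of_reachable (hG : G.IsAcyclic) (h : G.Adj k j)
    (hr : (G.deleteEdges {s(k, j)}).Reachable k v) :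
    v ∈ G.truncatedBranch (G.dist j v) k j := by
  obtain ⟨q, hq⟩ := hr.exists_isPath
  have hjq : j ∉ (q.mapLe (deleteEdges_le _)).support := by
    rw [Walk.support_mapLe_eq_support]
    exact hG.notMem_support_of_walk_deleteEdges h q
  have hpath : (Walk.cons h.symm (q.mapLe (deleteEdges_le _))).IsPath :=
    (Walk.cons_isPath_iff _ _).mpr ⟨hq.mapLe _, hjq⟩
  have hlen := hG.length_eq_dist_of_isPath hpath
  simp only [Walk.length_cons, Walk.length_mapLe] at hlen
  exact mem_truncatedBranch.mpr ⟨q, by omega⟩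

lemma IsAcyclic.notMem_truncatedBranch_of_adj (hG : G.IsAcyclic) {t : ℕ} (h : G.Adj i k) :
    k ∉ G.truncatedBranch t i k :=
  fun hk ↦ hG.not_reachable_deleteEdges_of_adj h (reachable_of_mem_truncatedBranch hk)

lemma IsAcyclic.disjoint_truncatedBranch (hG : G.IsAcyclic) {t : ℕ} {i' : V}
    (hi : G.Adj k i) (hi' : G.Adj k i') (hii' : i ≠ i') :
    Disjoint (G.truncatedBranch t i k) (G.truncatedBranch t i' k) := by
  refine Finset.disjoint_left.mpr fun v hv hv' ↦ ?_
  obtain ⟨p, -⟩ := mem_truncatedBranch.mp hv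
  obtain ⟨p', -⟩ := mem_truncatedBranch.mp hv'
  have hk := hG.notMem_support_of_walk_deleteEdges hi.symm p
  have hk' := hG.notMem_support_of_walk_deleteEdges hi'.symm p'
  obtain ⟨q, -⟩ := p.exists_walk_deleteEdges_of_notMem_support (deleteEdges_le _) hk
    (e := s(k, i)) (Sym2.mem_mk_left _ _)
  obtain ⟨q', -⟩ := p'.exists_walk_deleteEdges_of_notMem_support (deleteEdges_le _) hk'
    (e := s(k, i)) (Sym2.mem_mk_left _ _)
  have hadj : (G.deleteEdges {s(k, i)}).Adj k i' := by
    simpa [deleteEdges_adj, hi', hi.ne] using hii'.symm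
  -- `k → i' ⇝ v ⇝ i` avoids the bridge `ki`
  exact hG.not_reachable_deleteEdges_of_adj hi
    ((hadj.reachable.trans ⟨q'⟩).trans ⟨q.reverse⟩)

lemma IsAcyclic.truncatedBranch_succ [DecidableEq V] [DecidableRel G.Adj] (hG : G.IsAcyclic)
    {t : ℕ} (h : G.Adj k j) :
    G.truncatedBranch (t + 1) k j =
      insert k (((G.neighborFinset k).erase j).biUnion fun i ↦ G.truncatedBranch t i k) := by
  ext v
  simp only [Finset.mem_insert, Finset.mem_biUnion, Finset.mem_erase, mem_neighborFinset,
    mem_truncatedBranch]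
  constructor
  · rintro ⟨p, hp⟩
    cases hq : p.bypass with
    | nil => exact Or.inl rfl
    | @cons _ i _ hki q =>
      have hpath := hq ▸ p.bypass_isPath
      have hlen := hq ▸ p.length_bypass_le_length
      rw [Walk.cons_isPath_iff] at hpath
      obtain ⟨hki, hne⟩ := deleteEdges_adj.mp hki
      obtain ⟨q', hq'⟩ := q.exists_walk_deleteEdges_of_notMem_support (deleteEdges_le _)
        hpath.2 (e := s(i, k)) (Sym2.mem_mk_right _ _)
      refine Or.inr ⟨i, ⟨fun hij ↦ hne (by simp [hij]), hki⟩, q', ?_⟩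
      simp only [Walk.length_cons] at hlen
      omega
  · rintro (rfl | ⟨i, ⟨hij, hki⟩, p, hp⟩)
    · exact ⟨Walk.nil, Nat.succ_pos t⟩
    · obtain ⟨q, hq⟩ := p.exists_walk_deleteEdges_of_notMem_support (deleteEdges_le _)
        (hG.notMem_support_of_walk_deleteEdges hki.symm p) (e := s(k, j)) (Sym2.mem_mk_left _ _)
      have hadj : (G.deleteEdges {s(k, j)}).Adj k i := by
        simpa [deleteEdges_adj, hki, h.ne] using hij
      exact ⟨Walk.cons hadj q, by simp [hq, hp]⟩

lemma IsAcyclic.card_truncatedBranch_succ [DecidableEq V] [DecidableRel G.Adj]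
    (hG : G.IsAcyclic) {t : ℕ} (h : G.Adj k j) :
    #(G.truncatedBranch (t + 1) k j) =
      1 + ∑ i ∈ (G.neighborFinset k).erase j, #(G.truncatedBranch t i k) := by
  have adj_of_mem {i : V} (hi : i ∈ (G.neighborFinset k).erase j) : G.Adj k i :=
    (mem_neighborFinset G k i).mp (Finset.mem_of_mem_erase hi)
  rw [hG.truncatedBranch_succ h, Finset.card_insert_of_notMem, Finset.card_biUnion, add_comm]
  · exact fun i hi i' hi' hii' ↦
      hG.disjoint_truncatedBranch (adj_of_mem hi) (adj_of_mem hi') hii'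
  · simp only [Finset.mem_biUnion, not_exists, not_and]
    exact fun i hi ↦ hG.notMem_truncatedBranch_of_adj (adj_of_mem hi).symm

lemma IsAcyclic.count_eq_card_truncatedBranch [DecidableEq V] [DecidableRel G.Adj]
    {R : Type*} [AddCommMonoidWithOne R] (hG : G.IsAcyclic) (υ : ℕ → V → V → R)
    (h0 : ∀ k j, υ 0 k j = 0)
    (hupd : ∀ t k j, G.Adj k j →
      υ (t + 1) k j = 1 + ∑ i ∈ (G.neighborFinset k).erase j, υ t i k) (t : ℕ)
    (h : G.Adj k j) : υ t k j = #(G.truncatedBranch t k j) := by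
  induction t generalizing k j with
  | zero => simp [h0, truncatedBranch_zero]
  | succ t ih =>
    rw [hupd t k j h, hG.card_truncatedBranch_succ h, Nat.cast_add, Nat.cast_one, Nat.cast_sum]
    refine congrArg _ (Finset.sum_congr rfl fun i hi ↦ ih ?_)
    exact ((mem_neighborFinset G k i).mp (Finset.mem_of_mem_erase hi)).symm

end SimpleGraph

theorem consensus_propagation_counts_subtree_general {V : Type} [Fintype V] [DecidableEq V]
    (G : SimpleGraph V) [DecidableRel G.Adj] (hT : G.IsTree)
    (υ : ℕ → V → V → ℝ)
    (h0 : ∀ k j, υ 0 k j = 0)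
    (hupd : ∀ t k j, G.Adj k j →
      υ (t + 1) k j = 1 + ∑ i ∈ (G.neighborFinset k).erase j, υ t i k)
    (D : ℕ) (hD : ∀ u v : V, G.dist u v ≤ D) :
    ∀ t k j, G.Adj k j → D ≤ t →
      υ t k j = ({v : V | (G.deleteEdges {s(k, j)}).Reachable k v}.ncard : ℝ) := by
  intro t k j h ht
  have hbranch : ↑(G.truncatedBranch t k j) = {v | (G.deleteEdges {s(k, j)}).Reachable k v} :=
    Set.ext fun v ↦ ⟨SimpleGraph.reachable_of_mem_truncatedBranch, fun hr ↦
      SimpleGraph.truncatedBranch_mono ((hD j v).trans ht)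
        (hT.isAcyclic.mem_truncatedBranch_dist_of_reachable h hr)⟩
  rw [hT.isAcyclic.count_eq_card_truncatedBranch υ h0 hupd t h, ← hbranch, Set.ncard_coe_finset]

/-- On a tree, the count messages of consensus propagation converge to subtree
sizes: for `t ≥ D` (the diameter), `υ_{k→j}^{[t]}` equals the number of nodes in
the component of the tree containing `k` when the edge `{k, j}` is removed. -/
theorem consensus_propagation_counts_subtree {V : Type} [Fintype V] [DecidableEq V]
    (G : SimpleGraph V) [DecidableRel G.Adj] (hT : G.IsTree) (x : V → ℝ)
    (υ : ℕ → V → V → ℝ)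
    (h0 : ∀ k j, υ 0 k j = 0)
    (hupd : ∀ t k j, G.Adj k j →
      υ (t + 1) k j = 1 + ∑ i ∈ (G.neighborFinset k).erase j, υ t i k)
    (D : ℕ) (hD : ∀ u v : V, G.dist u v ≤ D) :
    ∀ t k j, G.Adj k j → D ≤ t →
      υ t k j = ({v : V | (G.deleteEdges {s(k, j)}).Reachable k v}.ncard : ℝ) :=
  consensus_propagation_counts_subtree_general G hT υ h0 hupd D hD
end
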